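/- arXiv:1803.09188 — 11 statements merged into one kernel-verified Lean document; each statement's English description precedes it below -/
import Mathlib

section
/- Let θ ∈ [0,1], λ ∈ ℝ, α > 0 and δT > 0 be such that |η| e^{-α δT} < 1, where η := (1 + i(1−θ)λδT)/(1 − iθλδT). Let s ∈ ℂ with |s| = e^{-α δT}, and let (ε_n^{(k)})_{n≥0, k≥0} be complex numbers satisfying ε_0^{(k)} = 0 for all k ≥ 0, ε_n^{(k)} = η s ε_{n−1}^{(k)} + (e^{iλδT} − η) s ε_{n−1}^{(k−1)} for all n ≥ 1 and k ≥ 1, and E := sup_{n≥0} |ε_n^{(0)}| < ∞. Then for every k ≥ 0, sup_{n≥0} |ε_n^{(k)}| ≤ ( |e^{iλδT} − η| e^{-αδT} / (1 − |η| e^{-αδT}) )^k · E. -/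
/-!
Write `a = η s` and `b = (e^{iλδT} - η) s`, so that `ε_n^{(k+1)} = a ε_{n-1}^{(k+1)} + b ε_{n-1}^{(k)}`
with `‖a‖ < 1`. By induction on `k`, assume `‖ε_n^{(k)}‖ ≤ q^k E` for all `n`, where
`q = ‖b‖ / (1 - ‖a‖)`. Then `u_n = ‖ε_n^{(k+1)}‖` satisfies `u_0 = 0` and
`u_{n+1} ≤ ‖a‖ u_n + (1 - ‖a‖) q^{k+1} E`, an affine contraction whose fixed point `q^{k+1} E`
is therefore never exceeded.
-/

theorem le_of_le_mul_add_one_sub_mul {u : ℕ → ℝ} {r B : ℝ} (hr : 0 ≤ r) (h0 : u 0 ≤ B)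
    (hstep : ∀ n, u (n + 1) ≤ r * u n + (1 - r) * B) (n : ℕ) : u n ≤ B := by
  induction n with
  | zero => exact h0
  | succ n ih =>
    calc u (n + 1) ≤ r * u n + (1 - r) * B := hstep n
      _ ≤ r * B + (1 - r) * B := by gcongr
      _ = B := by ring

theorem norm_le_pow_mul_of_two_level_rec {R : Type*} [SeminormedRing R] {ε : ℕ → ℕ → R}
    {a b : R} (ha : ‖a‖ < 1) (h0 : ∀ k, ε 0 k = 0)
    (hrec : ∀ n k, ε (n + 1) (k + 1) = a * ε n (k + 1) + b * ε n k)
    {E : ℝ} (hE : ∀ n, ‖ε n 0‖ ≤ E) (k n : ℕ) :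
    ‖ε n k‖ ≤ (‖b‖ / (1 - ‖a‖)) ^ k * E := by
  have h1a : 0 < 1 - ‖a‖ := sub_pos.mpr ha
  have hE0 : 0 ≤ E := by simpa [h0 0] using hE 0
  induction k generalizing n with
  | zero => simpa using hE n
  | succ k ih =>
    refine le_of_le_mul_add_one_sub_mul (u := fun n => ‖ε n (k + 1)‖) (norm_nonneg a)
      (by simp only [h0, norm_zero]; positivity) (fun m => ?_) n
    calc ‖ε (m + 1) (k + 1)‖ ≤ ‖a‖ * ‖ε m (k + 1)‖ + ‖b‖ * ‖ε m k‖ := by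
          rw [hrec]
          exact (norm_add_le _ _).trans (add_le_add (norm_mul_le _ _) (norm_mul_le _ _))
      _ ≤ ‖a‖ * ‖ε m (k + 1)‖ + ‖b‖ * ((‖b‖ / (1 - ‖a‖)) ^ k * E) := by gcongr; exact ih m
      _ = ‖a‖ * ‖ε m (k + 1)‖ + (1 - ‖a‖) * ((‖b‖ / (1 - ‖a‖)) ^ (k + 1) * E) := by
          rw [pow_succ]
          field_simp [h1a.ne']

theorem stmt_0_general
    (lam α δT : ℝ)
    (η : ℂ)
    (hstab : ‖η‖ * Real.exp (-α * δT) < 1)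
    (s : ℂ) (hs : ‖s‖ = Real.exp (-α * δT))
    (ε : ℕ → ℕ → ℂ)
    (h0 : ∀ k, ε 0 k = 0)
    (hrec : ∀ n k, 1 ≤ n → 1 ≤ k →
      ε n k = η * s * ε (n - 1) k
        + (Complex.exp (Complex.I * (lam * δT)) - η) * s * ε (n - 1) (k - 1))
    (E : ℝ) (hE : ∀ n, ‖ε n 0‖ ≤ E) :
    ∀ k n, ‖ε n k‖ ≤
      (‖Complex.exp (Complex.I * (lam * δT)) - η‖ * Real.exp (-α * δT)
        / (1 - ‖η‖ * Real.exp (-α * δT))) ^ k * E := by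
  have hrec' : ∀ n k, ε (n + 1) (k + 1) =
      η * s * ε n (k + 1) + (Complex.exp (Complex.I * (lam * δT)) - η) * s * ε n k := fun n k => by
    simpa using hrec (n + 1) (k + 1) (by omega) (by omega)
  have ha : ‖η * s‖ < 1 := by rwa [norm_mul, hs]
  intro k n
  simpa only [norm_mul, hs] using norm_le_pow_mul_of_two_level_rec ha h0 hrec' hE k n

/-- Parareal exponential θ-scheme error recursion on a single Fourier mode:
uniform-in-time contraction of the parareal iterates. -/
theorem stmt_0
    (θ lam α δT : ℝ)
    (hθ : θ ∈ Set.Icc (0:ℝ) 1) (hα : 0 < α) (hδT : 0 < δT)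
    (η : ℂ)
    (hη : η = (1 + Complex.I * ((1 - θ) * lam * δT)) / (1 - Complex.I * (θ * lam * δT)))
    (hstab : ‖η‖ * Real.exp (-α * δT) < 1)
    (s : ℂ) (hs : ‖s‖ = Real.exp (-α * δT))
    (ε : ℕ → ℕ → ℂ)
    (h0 : ∀ k, ε 0 k = 0)
    (hrec : ∀ n k, 1 ≤ n → 1 ≤ k →
      ε n k = η * s * ε (n - 1) k
        + (Complex.exp (Complex.I * (lam * δT)) - η) * s * ε (n - 1) (k - 1))
    (E : ℝ) (hE : ∀ n, ‖ε n 0‖ ≤ E) :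
    ∀ k n, ‖ε n k‖ ≤
      (‖Complex.exp (Complex.I * (lam * δT)) - η‖ * Real.exp (-α * δT)
        / (1 - ‖η‖ * Real.exp (-α * δT))) ^ k * E :=
  stmt_0_general lam α δT η hstab s hs ε h0 hrec E hE
end

section
/- Let θ ∈ [0,1], λ ∈ ℝ and δT > 0. If α > √(max(1/2 − θ, 0)) · |λ|, then 1 + (1−θ)²λ²δT² < (1 + θ²λ²δT²) e^{2αδT}; equivalently, |η| e^{-αδT} < 1, where η := (1 + i(1−θ)λδT)/(1 − iθλδT). -/
/-!
Write `x = λ²δT²` and `y = 2αδT > 0`. Since `(1-θ)² = θ² + (1-2θ)`, the claim reduces to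
`(1-2θ)x < (1+θ²x)(e^y - 1)`. Squaring the hypothesis on `α` gives `(1-2θ)x < y²/2`, and
`y²/2 < e^y - 1 ≤ (1+θ²x)(e^y - 1)`. The bound on `|η|` is the square root of this inequality,
as `|η|² = (1 + (1-θ)²λ²δT²)/(1 + θ²λ²δT²)`.
-/

open Real

lemma mul_sq_lt_sq_of_sqrt_max_mul_abs_lt {c x α : ℝ} (h : √(max c 0) * |x| < α) :
    c * x ^ 2 < α ^ 2 :=
  calc c * x ^ 2 ≤ max c 0 * x ^ 2 := by gcongr; exact le_max_left c 0
    _ = (√(max c 0) * |x|) ^ 2 := by rw [mul_pow, sq_sqrt (le_max_right c 0), sq_abs]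
    _ < α ^ 2 := by gcongr

lemma one_add_sq_div_two_lt_exp {y : ℝ} (hy : 0 < y) : 1 + y ^ 2 / 2 < exp y := by
  linarith [quadratic_le_exp_of_nonneg hy.le]

lemma one_add_sq_lt_mul_exp {θ lam α δT : ℝ} (hδT : 0 < δT) (hα : 0 < α)
    (hθα : (1 / 2 - θ) * lam ^ 2 < α ^ 2) :
    1 + (1 - θ) ^ 2 * lam ^ 2 * δT ^ 2 < (1 + θ ^ 2 * lam ^ 2 * δT ^ 2) * exp (2 * α * δT) := by
  have hexp := one_add_sq_div_two_lt_exp (by positivity : 0 < 2 * α * δT)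
  have hx : 0 ≤ θ ^ 2 * lam ^ 2 * δT ^ 2 := by positivity
  have hdiff : (1 - 2 * θ) * lam ^ 2 * δT ^ 2 ≤ (2 * α * δT) ^ 2 / 2 := by
    nlinarith [mul_le_mul_of_nonneg_right hθα.le (sq_nonneg δT)]
  nlinarith [mul_le_mul_of_nonneg_left (one_le_exp (by positivity : 0 ≤ 2 * α * δT)) hx]

lemma norm_one_add_I_mul_sq (a : ℝ) : ‖1 + Complex.I * a‖ ^ 2 = 1 + a ^ 2 := by
  rw [Complex.sq_norm, mul_comm, ← Complex.ofReal_one, Complex.normSq_add_mul_I, one_pow]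

lemma norm_one_sub_I_mul_sq (b : ℝ) : ‖1 - Complex.I * b‖ ^ 2 = 1 + b ^ 2 := by
  rw [sub_eq_add_neg, ← mul_neg, ← Complex.ofReal_neg, norm_one_add_I_mul_sq, neg_sq]

lemma norm_sq_one_add_I_mul_div_one_sub_I_mul (a b : ℝ) :
    ‖(1 + Complex.I * a) / (1 - Complex.I * b)‖ ^ 2 = (1 + a ^ 2) / (1 + b ^ 2) := by
  rw [norm_div, div_pow, norm_one_add_I_mul_sq, norm_one_sub_I_mul_sq]

lemma norm_mul_exp_neg_lt_one {z : ℂ} {c : ℝ} (h : ‖z‖ ^ 2 < exp (2 * c)) :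
    ‖z‖ * exp (-c) < 1 := by
  have hz : ‖z‖ < exp c := by
    rw [← pow_lt_pow_iff_left₀ (norm_nonneg z) (exp_pos c).le two_ne_zero, ← exp_nat_mul]
    simpa using h
  rwa [exp_neg, ← div_eq_mul_inv, div_lt_one (exp_pos c)]

theorem stmt_1_general (θ lam α δT : ℝ) (hδT : 0 < δT)
    (hα : Real.sqrt (max (1/2 - θ) 0) * |lam| < α) :
    1 + (1 - θ)^2 * lam^2 * δT^2 < (1 + θ^2 * lam^2 * δT^2) * Real.exp (2*α*δT) ∧
    ‖(1 + Complex.I * ((1 - θ) * lam * δT)) / (1 - Complex.I * (θ * lam * δT))‖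
      * Real.exp (-α * δT) < 1 := by
  have hα0 : 0 < α := lt_of_le_of_lt (by positivity) hα
  have hmain := one_add_sq_lt_mul_exp hδT hα0 (mul_sq_lt_sq_of_sqrt_max_mul_abs_lt hα)
  refine ⟨hmain, ?_⟩
  have hη := norm_sq_one_add_I_mul_div_one_sub_I_mul ((1 - θ) * lam * δT) (θ * lam * δT)
  push_cast at hη
  rw [neg_mul]
  apply norm_mul_exp_neg_lt_one
  rw [hη, div_lt_iff₀ (by positivity), ← mul_assoc]
  linear_combination hmain

/-- Stability of the exponential θ-scheme: if α > √((1/2−θ)⁺)|λ| then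
1 + (1−θ)²λ²δT² < (1 + θ²λ²δT²) e^{2αδT}, equivalently |η| e^{-αδT} < 1. -/
theorem stmt_1 (θ lam α δT : ℝ) (hθ : θ ∈ Set.Icc (0:ℝ) 1) (hδT : 0 < δT)
    (hα : Real.sqrt (max (1/2 - θ) 0) * |lam| < α) :
    1 + (1 - θ)^2 * lam^2 * δT^2 < (1 + θ^2 * lam^2 * δT^2) * Real.exp (2*α*δT) ∧
    ‖(1 + Complex.I * ((1 - θ) * lam * δT)) / (1 - Complex.I * (θ * lam * δT))‖
      * Real.exp (-α * δT) < 1 :=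
  stmt_1_general θ lam α δT hδT hα
end

section
/- Let θ ∈ [0,1]. Then θ ≥ 1/2 if and only if for all λ ∈ ℝ, all δT > 0 and all α > 0, one has 1 + (1−θ)²λ²δT² < (1 + θ²λ²δT²) e^{2αδT}, i.e. the stable function η̃ := (1 + (1−θ)²λ²δT²)/((1 + θ²λ²δT²) e^{2αδT}) satisfies η̃ < 1. -/
open Real

lemma one_sub_sq_le_sq_iff {θ : ℝ} : (1 - θ) ^ 2 ≤ θ ^ 2 ↔ 1 / 2 ≤ θ := by
  constructor <;> intro h <;> nlinarith

lemma one_add_mul_lt_one_add_mul_mul_exp {a b c t : ℝ} (hab : a ≤ b) (hb : 0 ≤ b) (hc : 0 ≤ c)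
    (ht : 0 < t) : 1 + a * c < (1 + b * c) * exp t :=
  calc 1 + a * c ≤ 1 + b * c := by gcongr
    _ < (1 + b * c) * exp t := lt_mul_of_one_lt_right (by positivity) (one_lt_exp_iff.mpr ht)

lemma le_of_forall_pos_one_add_lt_mul_exp {a b : ℝ} (hb : 0 ≤ b)
    (h : ∀ t, 0 < t → 1 + a < (1 + b) * exp t) : a ≤ b := by
  by_contra! hba
  have hb1 : 0 < 1 + b := by positivity
  -- at `t = log ((1 + a) / (1 + b))` the strict inequality becomes an equality
  have hratio : 1 < (1 + a) / (1 + b) := (one_lt_div hb1).mpr (by linarith)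
  have heq : (1 + b) * exp (log ((1 + a) / (1 + b))) = 1 + a := by
    rw [exp_log (by linarith), mul_div_cancel₀ _ hb1.ne']
  exact (h _ (log_pos hratio)).ne heq.symm

theorem stmt_2_general (θ : ℝ) :
    (1/2 ≤ θ) ↔ ∀ (lam δT α : ℝ), 0 < δT → 0 < α →
      1 + (1 - θ)^2 * lam^2 * δT^2 < (1 + θ^2 * lam^2 * δT^2) * Real.exp (2*α*δT) := by
  rw [← one_sub_sq_le_sq_iff]
  constructor
  · intro hsq lam δT α hδT hα
    simpa only [mul_assoc] using
      one_add_mul_lt_one_add_mul_mul_exp hsq (sq_nonneg θ) (by positivity : 0 ≤ lam ^ 2 * δT ^ 2)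
        (by positivity : 0 < 2 * α * δT)
  · intro h
    refine le_of_forall_pos_one_add_lt_mul_exp (sq_nonneg θ) fun t ht => ?_
    simpa [mul_div_cancel₀ t two_ne_zero] using h 1 1 (t / 2) one_pos (half_pos ht)

/-- θ ≥ 1/2 iff the stable function of the exponential θ-scheme is < 1
for all λ ∈ ℝ, δT > 0 and α > 0. -/
theorem stmt_2 (θ : ℝ) (hθ : θ ∈ Set.Icc (0:ℝ) 1) :
    (1/2 ≤ θ) ↔ ∀ (lam δT α : ℝ), 0 < δT → 0 < α →
      1 + (1 - θ)^2 * lam^2 * δT^2 < (1 + θ^2 * lam^2 * δT^2) * Real.exp (2*α*δT) :=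
  stmt_2_general θ
end

section
/- Let θ ∈ [0,1] and λ ∈ ℝ. Then there exists a constant C > 0 such that for all h ∈ (0,1], | e^{iλh} − (1 + i(1−θ)λh)/(1 − iθλh) | ≤ |θ − 1/2| λ² h² + C h³. In particular, for θ = 1/2 the left-hand side is O(h³). -/
/-!
Write `z = i t` with `t = λh`. The Taylor polynomial `T = 1 + z + z²/2` approximates `e^z` to
within `O(|t|³)` for every real `t` (for `|t| > 1` because `e^{it} - 1` is bounded by `|t|`), and
`(1 + (1-θ)z) - T·(1 - θz) = (θ - 1/2)z² + θz³/2`. Dividing by `1 - θz`, whose real part is `1`,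
does not increase norms, so only the `θ - 1/2` term survives at order two.
-/

open Complex

theorem norm_exp_I_mul_ofReal_sub_taylor_le (t : ℝ) :
    ‖exp (I * t) - (1 + I * t + (I * t) ^ 2 / 2)‖ ≤ 3 * |t| ^ 3 := by
  have hz : ‖I * t‖ = |t| := by simp
  rcases le_or_gt |t| 1 with ht | ht
  · have h := exp_bound (x := I * t) (hz ▸ ht) (n := 3) (by norm_num)
    norm_num [Finset.sum_range_succ, Nat.factorial] at h
    nlinarith [pow_nonneg (abs_nonneg t) 3]
  · calc ‖exp (I * t) - (1 + I * t + (I * t) ^ 2 / 2)‖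
          = ‖exp (I * t) - 1 - I * t - (I * t) ^ 2 / 2‖ := by ring_nf
      _ ≤ ‖exp (I * t) - 1‖ + ‖I * t‖ + ‖(I * t) ^ 2 / 2‖ :=
          norm_sub_le_of_le (norm_sub_le _ _) le_rfl
      _ ≤ |t| + |t| + |t| ^ 2 / 2 := by
          gcongr
          · simpa using Real.norm_exp_I_mul_ofReal_sub_one_le (x := t)
          · exact hz.le
          · simp
      _ ≤ 3 * |t| ^ 3 := by nlinarith

theorem one_le_norm_one_sub_I_mul_ofReal (x : ℝ) : 1 ≤ ‖1 - I * x‖ := by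
  simpa using abs_re_le_norm (1 - I * x)

theorem thetaScheme_defect_eq {K : Type*} [Field K] (θ z : K) :
    1 + (1 - θ) * z - (1 + z + z ^ 2 / 2) * (1 - θ * z) =
      (θ - 1 / 2) * z ^ 2 + θ * z ^ 3 / 2 := by
  ring

theorem norm_thetaScheme_defect_le (θ : ℝ) (z : ℂ) :
    ‖1 + (1 - θ) * z - (1 + z + z ^ 2 / 2) * (1 - θ * z)‖ ≤
      |θ - 1 / 2| * ‖z‖ ^ 2 + |θ| * ‖z‖ ^ 3 / 2 := by
  have hθ : (θ : ℂ) - 1 / 2 = ((θ - 1 / 2 : ℝ) : ℂ) := by push_cast; rfl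
  rw [thetaScheme_defect_eq]
  refine (norm_add_le _ _).trans_eq ?_
  rw [hθ, norm_div, norm_mul, norm_mul, norm_pow, norm_pow, norm_real, norm_real]
  norm_num

theorem norm_exp_I_mul_sub_thetaScheme_le (θ t : ℝ) :
    ‖exp (I * t) - (1 + I * ((1 - θ) * t)) / (1 - I * (θ * t))‖ ≤
      |θ - 1 / 2| * t ^ 2 + (3 + |θ|) * |t| ^ 3 := by
  set z : ℂ := I * t
  have hz : ‖z‖ = |t| := by simp [z]
  have hD : 1 ≤ ‖1 - θ * z‖ := by
    simpa [z, mul_left_comm] using one_le_norm_one_sub_I_mul_ofReal (θ * t)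
  have hD0 : 1 - θ * z ≠ 0 := norm_pos_iff.mp (one_pos.trans_le hD)
  have hsplit : exp z - (1 + (1 - θ) * z) / (1 - θ * z) =
      (exp z - (1 + z + z ^ 2 / 2)) -
        (1 + (1 - θ) * z - (1 + z + z ^ 2 / 2) * (1 - θ * z)) / (1 - θ * z) := by
    field_simp
    ring
  calc ‖exp (I * t) - (1 + I * ((1 - θ) * t)) / (1 - I * (θ * t))‖
      = ‖exp z - (1 + (1 - θ) * z) / (1 - θ * z)‖ := by simp only [z]; ring_nf
    _ ≤ ‖exp z - (1 + z + z ^ 2 / 2)‖ +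
          ‖1 + (1 - θ) * z - (1 + z + z ^ 2 / 2) * (1 - θ * z)‖ / ‖1 - θ * z‖ := by
        rw [hsplit, ← norm_div]
        exact norm_sub_le _ _
    _ ≤ 3 * |t| ^ 3 + (|θ - 1 / 2| * ‖z‖ ^ 2 + |θ| * ‖z‖ ^ 3 / 2) :=
        add_le_add (norm_exp_I_mul_ofReal_sub_taylor_le t)
          ((div_le_self (norm_nonneg _) hD).trans (norm_thetaScheme_defect_le θ z))
    _ ≤ |θ - 1 / 2| * t ^ 2 + (3 + |θ|) * |t| ^ 3 := by
        rw [hz, sq_abs]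
        nlinarith [mul_nonneg (abs_nonneg θ) (pow_nonneg (abs_nonneg t) 3)]

theorem stmt_3_general (θ lam : ℝ) :
    ∃ C > 0, ∀ h : ℝ, 0 < h → h ≤ 1 →
      ‖Complex.exp (Complex.I * (lam * h)) -
        (1 + Complex.I * ((1 - θ) * lam * h)) / (1 - Complex.I * (θ * lam * h))‖
        ≤ |θ - 1/2| * lam^2 * h^2 + C * h^3 := by
  refine ⟨(3 + |θ|) * |lam| ^ 3 + 1, by positivity, fun h hh _ => ?_⟩
  have key := norm_exp_I_mul_sub_thetaScheme_le θ (lam * h)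
  push_cast at key
  simp only [mul_assoc] at key ⊢
  refine key.trans ?_
  rw [abs_mul, abs_of_pos hh]
  nlinarith [pow_pos hh 3]

/-- Local accuracy of the amplification factor of the exponential θ-scheme:
|e^{iλh} − (1 + i(1−θ)λh)/(1 − iθλh)| ≤ |θ − 1/2| λ² h² + C h³ on (0,1]. -/
theorem stmt_3 (θ lam : ℝ) (hθ : θ ∈ Set.Icc (0:ℝ) 1) :
    ∃ C > 0, ∀ h : ℝ, 0 < h → h ≤ 1 →
      ‖Complex.exp (Complex.I * (lam * h)) -
        (1 + Complex.I * ((1 - θ) * lam * h)) / (1 - Complex.I * (θ * lam * h))‖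
        ≤ |θ - 1/2| * lam^2 * h^2 + C * h^3 :=
  stmt_3_general θ lam
end

section
/- Let γ₁ ∈ [0,1) and γ₂ ≥ 0. Let ε : ℕ × ℕ → [0,∞) satisfy ε(0,k) = 0 for all k ≥ 0, ε(n,k) ≤ γ₁ ε(n−1,k) + γ₂ ε(n−1,k−1) for all n ≥ 1 and k ≥ 1, and E₀ := sup_{n≥0} ε(n,0) < ∞. Then for every k ≥ 0, sup_{n≥0} ε(n,k) ≤ ( γ₂/(1 − γ₁) )^k · E₀. -/
/-! For fixed `k`, the recursion in `n` is a contraction with factor `γ₁` driven by the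
previous iterate, so the bound `ρ ^ k * E₀` with `ρ = γ₂ / (1 - γ₁)` is inherited from
level `k` to level `k + 1` through the identity `γ₁ ρ + γ₂ = ρ`. -/

theorem forall_le_of_succ_le_mul_add {γ B : ℝ} {a c : ℕ → ℝ} (hγ : 0 ≤ γ) (ha₀ : a 0 ≤ B)
    (hc : ∀ n, c n ≤ (1 - γ) * B) (hstep : ∀ n, a (n + 1) ≤ γ * a n + c n) :
    ∀ n, a n ≤ B := by
  intro n
  induction n with
  | zero => exact ha₀
  | succ n ih =>
    calc a (n + 1) ≤ γ * a n + c n := hstep n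
      _ ≤ γ * B + (1 - γ) * B := add_le_add (mul_le_mul_of_nonneg_left ih hγ) (hc n)
      _ = B := by ring

theorem stmt_5_general (γ₁ γ₂ : ℝ) (h10 : 0 ≤ γ₁) (h11 : γ₁ < 1) (h2 : 0 ≤ γ₂)
    (ε : ℕ → ℕ → ℝ)
    (h0 : ∀ k, ε 0 k = 0)
    (hrec : ∀ n k, 1 ≤ n → 1 ≤ k → ε n k ≤ γ₁ * ε (n - 1) k + γ₂ * ε (n - 1) (k - 1))
    (E₀ : ℝ) (hE : ∀ n, ε n 0 ≤ E₀) :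
    ∀ k n, ε n k ≤ (γ₂ / (1 - γ₁))^k * E₀ := by
  have hgap : 1 - γ₁ ≠ 0 := by linarith
  have hE₀ : 0 ≤ E₀ := h0 0 ▸ hE 0
  intro k
  induction k with
  | zero => simpa using hE
  | succ k ih =>
    refine forall_le_of_succ_le_mul_add (c := fun n => γ₂ * ε n k) h10
      (by rw [h0]; positivity) (fun n => ?_) (fun n => ?_)
    · calc γ₂ * ε n k ≤ γ₂ * ((γ₂ / (1 - γ₁)) ^ k * E₀) := mul_le_mul_of_nonneg_left (ih n) h2
        _ = (1 - γ₁) * ((γ₂ / (1 - γ₁)) ^ (k + 1) * E₀) := by rw [pow_succ]; field_simp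
    · simpa using hrec (n + 1) (k + 1) (by omega) (by omega)

/-- Abstract parareal error recursion with contractive coarse propagator:
time-uniform convergence with rate (γ₂/(1−γ₁))^k. -/
theorem stmt_5 (γ₁ γ₂ : ℝ) (h10 : 0 ≤ γ₁) (h11 : γ₁ < 1) (h2 : 0 ≤ γ₂)
    (ε : ℕ → ℕ → ℝ) (hpos : ∀ n k, 0 ≤ ε n k)
    (h0 : ∀ k, ε 0 k = 0)
    (hrec : ∀ n k, 1 ≤ n → 1 ≤ k → ε n k ≤ γ₁ * ε (n - 1) k + γ₂ * ε (n - 1) (k - 1))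
    (E₀ : ℝ) (hE : ∀ n, ε n 0 ≤ E₀) :
    ∀ k n, ε n k ≤ (γ₂ / (1 - γ₁))^k * E₀ :=
  stmt_5_general γ₁ γ₂ h10 h11 h2 ε h0 hrec E₀ hE
end

section
/- Let γ₁, γ₂ ≥ 0 and N ∈ ℕ. Let ε : {0,…,N} × ℕ → [0,∞) satisfy ε(0,k) = 0 for all k ≥ 0 and ε(n,k) ≤ γ₁ ε(n−1,k) + γ₂ ε(n−1,k−1) for all 1 ≤ n ≤ N and k ≥ 1. Then for all k ≥ 1 and 0 ≤ n ≤ N, ε(n,k) ≤ γ₂^k · (max(1,γ₁))^n · (n^k / k!) · max_{0≤j≤n} ε(j,0). -/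
/-!
Writing `a = max 1 γ₁` and `M` for the largest initial error, induction on `n` gives the sharper
bound `ε n k ≤ γ₂ ^ k * a ^ n * (n.choose k) * M`: the two terms of the recursion reproduce the two
terms of Pascal's rule. The theorem follows from `n.choose k ≤ n ^ k / k!`.
-/

theorem le_pow_mul_pow_mul_choose_mul_of_rec {ε : ℕ → ℕ → ℝ} {a b M : ℝ} {N : ℕ}
    (ha : 1 ≤ a) (hb : 0 ≤ b) (h0 : ∀ k, ε 0 k = 0) (hM : ∀ n ≤ N, ε n 0 ≤ M)
    (hrec : ∀ n k, n < N → ε (n + 1) (k + 1) ≤ a * ε n (k + 1) + b * ε n k) :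
    ∀ n ≤ N, ∀ k, ε n k ≤ b ^ k * a ^ n * n.choose k * M := by
  have hM₀ : 0 ≤ M := h0 0 ▸ hM 0 (Nat.zero_le N)
  intro n hn k
  induction n generalizing k with
  | zero => cases k <;> simp [h0, hM₀]
  | succ n ih =>
    cases k with
    | zero =>
      simpa using (hM _ hn).trans (le_mul_of_one_le_left hM₀ (one_le_pow₀ (n := n + 1) ha))
    | succ k =>
      have ih := ih (by omega)
      calc ε (n + 1) (k + 1) ≤ a * ε n (k + 1) + b * ε n k := hrec n k hn
        _ ≤ a * (b ^ (k + 1) * a ^ n * n.choose (k + 1) * M) +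
              b * (b ^ k * a ^ n * n.choose k * M) := by
          gcongr
          exacts [ih (k + 1), ih k]
        _ ≤ a * (b ^ (k + 1) * a ^ n * n.choose (k + 1) * M) +
              a * (b * (b ^ k * a ^ n * n.choose k * M)) :=
          add_le_add le_rfl (le_mul_of_one_le_left (by positivity) ha)
        _ = b ^ (k + 1) * a ^ (n + 1) * (n + 1).choose (k + 1) * M := by
          rw [Nat.choose_succ_succ']
          push_cast
          ring

theorem stmt_6_general (γ₁ γ₂ : ℝ) (h2 : 0 ≤ γ₂) (N : ℕ)
    (ε : ℕ → ℕ → ℝ) (hpos : ∀ n k, 0 ≤ ε n k)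
    (h0 : ∀ k, ε 0 k = 0)
    (hrec : ∀ n k, 1 ≤ n → n ≤ N → 1 ≤ k →
      ε n k ≤ γ₁ * ε (n - 1) k + γ₂ * ε (n - 1) (k - 1)) :
    ∀ k n, 1 ≤ k → n ≤ N →
      ε n k ≤ γ₂^k * (max 1 γ₁)^n * ((n : ℝ)^k / (Nat.factorial k)) *
        ((Finset.Icc 0 n).sup' (Finset.nonempty_Icc.mpr (Nat.zero_le n)) (fun j => ε j 0)) := by
  intro k n _ hn
  set M := (Finset.Icc 0 n).sup' (Finset.nonempty_Icc.mpr (Nat.zero_le n)) (fun j => ε j 0)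
  have hM : ∀ j ≤ n, ε j 0 ≤ M := fun j hj ↦
    Finset.le_sup' (fun j => ε j 0) (Finset.mem_Icc.mpr ⟨Nat.zero_le j, hj⟩)
  have hrec' : ∀ m k, m < n →
      ε (m + 1) (k + 1) ≤ max 1 γ₁ * ε m (k + 1) + γ₂ * ε m k := fun m k hm ↦ by
    have := hrec (m + 1) (k + 1) (by omega) (by omega) (by omega)
    simp only [Nat.add_sub_cancel] at this
    exact this.trans (by gcongr; exacts [hpos m (k + 1), le_max_right 1 γ₁])
  calc ε n k ≤ γ₂ ^ k * max 1 γ₁ ^ n * n.choose k * M :=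
        le_pow_mul_pow_mul_choose_mul_of_rec (le_max_left 1 γ₁) h2 h0 hM hrec' n le_rfl k
    _ ≤ _ := by
      have : 0 ≤ M := h0 0 ▸ hM 0 (Nat.zero_le n)
      gcongr
      exact Nat.choose_le_pow_div k n

/-- Abstract parareal error recursion on a bounded interval with a possibly
non-contractive coarse propagator: combinatorial convergence bound. -/
theorem stmt_6 (γ₁ γ₂ : ℝ) (h1 : 0 ≤ γ₁) (h2 : 0 ≤ γ₂) (N : ℕ)
    (ε : ℕ → ℕ → ℝ) (hpos : ∀ n k, 0 ≤ ε n k)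
    (h0 : ∀ k, ε 0 k = 0)
    (hrec : ∀ n k, 1 ≤ n → n ≤ N → 1 ≤ k →
      ε n k ≤ γ₁ * ε (n - 1) k + γ₂ * ε (n - 1) (k - 1)) :
    ∀ k n, 1 ≤ k → n ≤ N →
      ε n k ≤ γ₂^k * (max 1 γ₁)^n * ((n : ℝ)^k / (Nat.factorial k)) *
        ((Finset.Icc 0 n).sup' (Finset.nonempty_Icc.mpr (Nat.zero_le n)) (fun j => ε j 0)) :=
  stmt_6_general γ₁ γ₂ h2 N ε hpos h0 hrec
end

section
/- Let L > 0, δT > 0, α ≥ 0 and θ ∈ [0,1]. Set γ₁ := (1 + (1−θ) L δT) e^{-α δT}, γ₂ := L δT (1 + e^{L δT}) e^{-α δT}, and f(θ) := γ₁ + γ₂ = (1 + (2−θ) L δT + L δT e^{L δT}) e^{-α δT}. Assume f(θ) < 1. If ε : ℕ × ℕ → [0,∞) satisfies ε(0,k) = 0 for all k, ε(n,k) ≤ γ₁ ε(n−1,k) + γ₂ ε(n−1,k−1) for all n,k ≥ 1, and sup_n ε(n,0) < ∞, then for every k ≥ 0, sup_{n≥0} ε(n,k) ≤ f(θ)^k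 · sup_{n≥0} ε(n,0). -/
/-!
The bound `f(θ)^k E` is propagated by a double induction, on the iteration `k` and, inside it,
on the coarse time `n`. Since `γ₁, γ₂ ≥ 0` and `f(θ) = γ₁ + γ₂ ≤ 1`, the recursion gives
`ε(n+1,k+1) ≤ γ₁ f^(k+1) E + γ₂ f^k E ≤ (γ₁ + γ₂) f^k E = f^(k+1) E`; the factor `f ≤ 1` is what
makes the bound uniform in `n`.
-/

theorem le_add_pow_mul_of_le_mul_add_mul {a b E : ℝ} (ha : 0 ≤ a) (hb : 0 ≤ b)
    (hab : a + b ≤ 1) {ε : ℕ → ℕ → ℝ} (h0 : ∀ k, ε 0 k = 0) (hE : ∀ n, ε n 0 ≤ E)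
    (hrec : ∀ n k, ε (n + 1) (k + 1) ≤ a * ε n (k + 1) + b * ε n k) :
    ∀ k n, ε n k ≤ (a + b) ^ k * E := by
  have hE0 : 0 ≤ E := h0 0 ▸ hE 0
  have hab0 : 0 ≤ a + b := add_nonneg ha hb
  intro k
  induction k with
  | zero => simpa using hE
  | succ k ihk =>
    intro n
    induction n with
    | zero => rw [h0]; positivity
    | succ n ihn =>
      have hdecay : (a + b) ^ (k + 1) * E ≤ (a + b) ^ k * E :=
        mul_le_mul_of_nonneg_right (pow_le_pow_of_le_one hab0 hab k.le_succ) hE0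
      calc ε (n + 1) (k + 1) ≤ a * ε n (k + 1) + b * ε n k := hrec n k
        _ ≤ a * ((a + b) ^ k * E) + b * ((a + b) ^ k * E) := by
          gcongr
          · exact ihn.trans hdecay
          · exact ihk n
        _ = (a + b) ^ (k + 1) * E := by ring

theorem stmt_14_general (L δT α θ : ℝ) (hL : 0 < L) (hδT : 0 < δT)
    (hθ : θ ∈ Set.Icc (0:ℝ) 1)
    (hf : (1 + (2 - θ) * L * δT + L * δT * Real.exp (L * δT)) * Real.exp (-α * δT) < 1)
    (ε : ℕ → ℕ → ℝ)
    (h0 : ∀ k, ε 0 k = 0)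
    (hrec : ∀ n k, 1 ≤ n → 1 ≤ k →
      ε n k ≤ (1 + (1 - θ) * L * δT) * Real.exp (-α * δT) * ε (n - 1) k
        + L * δT * (1 + Real.exp (L * δT)) * Real.exp (-α * δT) * ε (n - 1) (k - 1))
    (E : ℝ) (hE : ∀ n, ε n 0 ≤ E) :
    ∀ k n, ε n k ≤
      ((1 + (2 - θ) * L * δT + L * δT * Real.exp (L * δT)) * Real.exp (-α * δT))^k * E := by
  have hLδT : 0 ≤ L * δT := (mul_pos hL hδT).le
  have hγ₁ : 0 ≤ (1 + (1 - θ) * L * δT) * Real.exp (-α * δT) := by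
    have : 0 ≤ (1 - θ) * (L * δT) := mul_nonneg (sub_nonneg.2 hθ.2) hLδT
    have := Real.exp_pos (-α * δT)
    rw [mul_assoc (1 - θ)]
    positivity
  have hγ₂ : 0 ≤ L * δT * (1 + Real.exp (L * δT)) * Real.exp (-α * δT) := by positivity
  have hsum : (1 + (1 - θ) * L * δT) * Real.exp (-α * δT)
      + L * δT * (1 + Real.exp (L * δT)) * Real.exp (-α * δT)
      = (1 + (2 - θ) * L * δT + L * δT * Real.exp (L * δT)) * Real.exp (-α * δT) := by ring
  rw [← hsum]
  exact le_add_pow_mul_of_le_mul_add_mul hγ₁ hγ₂ (hsum ▸ hf.le) h0 hE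
    fun n k => hrec (n + 1) (k + 1) (Nat.le_add_left 1 n) (Nat.le_add_left 1 k)

/-- Parareal exponential θ-scheme for the nonlinear damped stochastic Schrödinger
equation: time-uniform convergence with rate f(θ)^k whenever f(θ) < 1. -/
theorem stmt_14 (L δT α θ : ℝ) (hL : 0 < L) (hδT : 0 < δT) (hα : 0 ≤ α)
    (hθ : θ ∈ Set.Icc (0:ℝ) 1)
    (hf : (1 + (2 - θ) * L * δT + L * δT * Real.exp (L * δT)) * Real.exp (-α * δT) < 1)
    (ε : ℕ → ℕ → ℝ) (hpos : ∀ n k, 0 ≤ ε n k)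
    (h0 : ∀ k, ε 0 k = 0)
    (hrec : ∀ n k, 1 ≤ n → 1 ≤ k →
      ε n k ≤ (1 + (1 - θ) * L * δT) * Real.exp (-α * δT) * ε (n - 1) k
        + L * δT * (1 + Real.exp (L * δT)) * Real.exp (-α * δT) * ε (n - 1) (k - 1))
    (E : ℝ) (hE : ∀ n, ε n 0 ≤ E) :
    ∀ k n, ε n k ≤
      ((1 + (2 - θ) * L * δT + L * δT * Real.exp (L * δT)) * Real.exp (-α * δT))^k * E :=
  stmt_14_general L δT α θ hL hδT hθ hf ε h0 hrec E hE
end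

section
/- Let L > 0, α ≥ 0, δT ∈ (0,1], N ∈ ℕ, and T := N δT. Set γ₁ := (1 + L δT) e^{-α δT} and γ₂ := (2 + L δT e^{L δT}) L δT e^{-α δT}. Let ε : {0,…,N} × ℕ → [0,∞) satisfy ε(0,k) = 0 for all k and ε(n,k) ≤ γ₁ ε(n−1,k) + γ₂ ε(n−1,k−1) for all 1 ≤ n ≤ N and k ≥ 1. Then with C := (2 + L e^{L}) L, for every k ≥ 1, max_{0≤n≤N} ε(n,k) ≤ (e^{-α δT})^k · ((C T)^k / k!) · max( e^{(L−α)T}, 1 ) · max_{0≤n≤N} ε(n,0). -/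
/-!
Unrolling the recursion along lattice paths from `(n, k)` down to the column `k = 0` gives
`ε(n, k) ≤ C(n, k) γ₂^k max(γ₁, 1)^(n-k) max_j ε(j, 0)`. It remains to bound `C(n, k) ≤ N^k / k!`,
`γ₁ ≤ e^{(L-α)δT}` (from `1 + x ≤ eˣ`) and `γ₂ ≤ e^{-αδT} (2 + L e^L) L δT` (from `δT ≤ 1`).
-/

open Real

theorem le_choose_mul_pow_of_recursion {a b g M : ℝ} {N : ℕ} {e : ℕ → ℕ → ℝ}
    (ha : 0 ≤ a) (hb : 0 ≤ b) (hag : a ≤ g) (hg : 1 ≤ g) (hM : 0 ≤ M)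
    (he0 : ∀ k, e 0 (k + 1) = 0) (heM : ∀ m ≤ N, e m 0 ≤ M)
    (hrec : ∀ n k, n < N → e (n + 1) (k + 1) ≤ a * e n (k + 1) + b * e n k) :
    ∀ m ≤ N, ∀ k, e m k ≤ b ^ k * m.choose k * g ^ (m - k) * M := by
  intro m
  induction m with
  | zero =>
    rintro - (_ | k)
    · simpa using heM 0 (Nat.zero_le N)
    · simp [he0]
  | succ n ih =>
    intro hn
    have hn' : n ≤ N := by omega
    have hg0 : 0 ≤ g := zero_le_one.trans hg
    rintro (_ | k)
    · simpa using heM (n + 1) hn |>.trans (le_mul_of_one_le_left hM (one_le_pow₀ hg))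
    have hfirst : a * e n (k + 1) ≤ b ^ (k + 1) * n.choose (k + 1) * g ^ (n - k) * M := by
      rcases lt_or_ge n (k + 1) with hnk | hkn
      · simpa [Nat.choose_eq_zero_of_lt hnk] using
          mul_le_mul_of_nonneg_left (ih hn' (k + 1)) ha
      · calc a * e n (k + 1) ≤ a * (b ^ (k + 1) * n.choose (k + 1) * g ^ (n - (k + 1)) * M) := by
              gcongr; exact ih hn' (k + 1)
          _ ≤ g * (b ^ (k + 1) * n.choose (k + 1) * g ^ (n - (k + 1)) * M) := by gcongr
          _ = b ^ (k + 1) * n.choose (k + 1) * g ^ (n - k) * M := by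
              rw [show n - k = n - (k + 1) + 1 by omega, pow_succ]; ring
    have hsecond : b * e n k ≤ b ^ (k + 1) * n.choose k * g ^ (n - k) * M := by
      calc b * e n k ≤ b * (b ^ k * n.choose k * g ^ (n - k) * M) := by gcongr; exact ih hn' k
        _ = _ := by ring
    calc e (n + 1) (k + 1) ≤ a * e n (k + 1) + b * e n k := hrec n k hn
      _ ≤ b ^ (k + 1) * (n + 1).choose (k + 1) * g ^ (n + 1 - (k + 1)) * M := by
        rw [Nat.choose_succ_succ', Nat.add_sub_add_right, Nat.cast_add]
        linarith

theorem one_add_mul_exp_le_exp_add (x y : ℝ) : (1 + x) * exp y ≤ exp (x + y) := by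
  rw [exp_add]
  gcongr
  linarith [add_one_le_exp x]

theorem mul_mul_exp_mul_le_mul_exp {L δ : ℝ} (hL : 0 ≤ L) (hδ1 : δ ≤ 1) :
    L * δ * exp (L * δ) ≤ L * exp L := by
  rw [mul_assoc]
  gcongr
  calc δ * exp (L * δ) ≤ 1 * exp (L * 1) := by gcongr
    _ = exp L := by simp

theorem max_exp_one_pow (x : ℝ) (N : ℕ) : max (exp x) 1 ^ N = max (exp (N * x)) 1 := by
  rcases le_total 0 x with hx | hx
  · rw [max_eq_left (one_le_exp_iff.2 hx), max_eq_left (one_le_exp_iff.2 (by positivity)),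
      exp_nat_mul]
  · rw [max_eq_right (exp_le_one_iff.2 hx),
      max_eq_right (exp_le_one_iff.2 (mul_nonpos_of_nonneg_of_nonpos N.cast_nonneg hx)), one_pow]

theorem stmt_15_general (L α δT : ℝ) (hL : 0 < L) (hδT0 : 0 < δT) (hδT1 : δT ≤ 1)
    (N : ℕ)
    (ε : ℕ → ℕ → ℝ)
    (h0 : ∀ k, ε 0 k = 0)
    (hrec : ∀ n k, 1 ≤ n → n ≤ N → 1 ≤ k →
      ε n k ≤ (1 + L * δT) * Real.exp (-α * δT) * ε (n - 1) k
        + (2 + L * δT * Real.exp (L * δT)) * L * δT * Real.exp (-α * δT) * ε (n - 1) (k - 1)) :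
    ∀ k, 1 ≤ k → ∀ n ≤ N,
      ε n k ≤ (Real.exp (-α * δT))^k
        * (((2 + L * Real.exp L) * L * ((N : ℝ) * δT))^k / (Nat.factorial k))
        * max (Real.exp ((L - α) * ((N : ℝ) * δT))) 1
        * ((Finset.Icc 0 N).sup' (Finset.nonempty_Icc.mpr (Nat.zero_le N)) (fun j => ε j 0)) := by
  intro k _ n hn
  set γ₁ := (1 + L * δT) * exp (-α * δT)
  set γ₂ := (2 + L * δT * exp (L * δT)) * L * δT * exp (-α * δT)
  set M := (Finset.Icc 0 N).sup' (Finset.nonempty_Icc.mpr (Nat.zero_le N)) (fun j => ε j 0)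
  set g := max (exp ((L - α) * δT)) 1
  have hεM : ∀ m ≤ N, ε m 0 ≤ M := fun m hm => Finset.le_sup' (fun j => ε j 0) (by simp [hm])
  have hγ₁ : γ₁ ≤ g := by
    refine (one_add_mul_exp_le_exp_add _ _).trans ?_
    rw [← add_mul, ← sub_eq_add_neg]
    exact le_max_left _ _
  have hγ₂ : γ₂ ≤ exp (-α * δT) * ((2 + L * exp L) * L * δT) := by
    calc γ₂ = exp (-α * δT) * ((2 + L * δT * exp (L * δT)) * L * δT) := by ring
      _ ≤ _ := by gcongr _ * ((2 + ?_) * _ * _); exact mul_mul_exp_mul_le_mul_exp hL.le hδT1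
  have hM0 : 0 ≤ M := h0 0 ▸ hεM 0 N.zero_le
  have hchoose : (n.choose k : ℝ) ≤ N ^ k / k.factorial :=
    (Nat.cast_le.2 (Nat.choose_le_choose k hn)).trans (Nat.choose_le_pow_div k N)
  have hbinom : ε n k ≤ γ₂ ^ k * n.choose k * g ^ (n - k) * M :=
    le_choose_mul_pow_of_recursion (by positivity) (by positivity) hγ₁ (le_max_right _ _)
      hM0 (fun k => h0 (k + 1)) hεM
      (fun n k hn => by
        simpa only [Nat.add_sub_cancel] using hrec (n + 1) (k + 1) (by omega) hn (by omega))
      n hn k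
  calc ε n k ≤ γ₂ ^ k * n.choose k * g ^ (n - k) * M := hbinom
    _ ≤ (exp (-α * δT) * ((2 + L * exp L) * L * δT)) ^ k * (N ^ k / k.factorial) * g ^ N * M := by
      gcongr
      · exact le_max_right _ _
      · omega
    _ = _ := by
      rw [max_exp_one_pow, show (N : ℝ) * ((L - α) * δT) = (L - α) * (N * δT) by ring]
      simp only [mul_pow]
      ring

/-- Parareal algorithm with exponential Euler coarse propagator for the nonlinear
damped stochastic Schrödinger equation: convergence bound on a bounded interval. -/
theorem stmt_15 (L α δT : ℝ) (hL : 0 < L) (hα : 0 ≤ α) (hδT0 : 0 < δT) (hδT1 : δT ≤ 1)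
    (N : ℕ)
    (ε : ℕ → ℕ → ℝ) (hpos : ∀ n k, 0 ≤ ε n k)
    (h0 : ∀ k, ε 0 k = 0)
    (hrec : ∀ n k, 1 ≤ n → n ≤ N → 1 ≤ k →
      ε n k ≤ (1 + L * δT) * Real.exp (-α * δT) * ε (n - 1) k
        + (2 + L * δT * Real.exp (L * δT)) * L * δT * Real.exp (-α * δT) * ε (n - 1) (k - 1)) :
    ∀ k, 1 ≤ k → ∀ n ≤ N,
      ε n k ≤ (Real.exp (-α * δT))^k
        * (((2 + L * Real.exp L) * L * ((N : ℝ) * δT))^k / (Nat.factorial k))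
        * max (Real.exp ((L - α) * ((N : ℝ) * δT))) 1
        * ((Finset.Icc 0 N).sup' (Finset.nonempty_Icc.mpr (Nat.zero_le N)) (fun j => ε j 0)) :=
  stmt_15_general L α δT hL hδT0 hδT1 N ε h0 hrec
end

section
/- Let α ≥ 0, L ≥ 0, δT > 0, J ∈ ℕ with J ≥ 1, δt := δT/J, and a ≥ 0. Suppose nonnegative reals G₀, G₁, …, G_J satisfy G_j² ≤ 2 e^{-2αδT} a + 2 δT δt L² ∑_{l=1}^{j} e^{-2α l δt} G_{j−l}² for every j = 0, 1, …, J. Then for every j = 0, 1, …, J, G_j² ≤ 2 e^{2 L² δT²} e^{-2αδT} a. -/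
/-! The weights `exp (-2 α l δt)` are at most `1`, so `x j := G j ^ 2` satisfies the
classical discrete Gronwall inequality `x j ≤ A + c ∑_{i<j} x i` with
`A = 2 e^{-2αδT} a` and `c = 2 δT δt L²`. By induction `x j ≤ A (1 + c)^j ≤ A e^{c j}`,
and `c j = 2 L² δT² (j / J) ≤ 2 L² δT²`. -/

open Finset

theorem Finset.sum_Icc_one_sub_eq_sum_range {M : Type*} [AddCommMonoid M] (f : ℕ → M) (n : ℕ) :
    ∑ l ∈ Icc 1 n, f (n - l) = ∑ i ∈ range n, f i :=
  sum_nbij' (n - ·) (n - ·) (fun _ hl => by simp only [mem_Icc, mem_range] at *; omega)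
    (fun _ hi => by simp only [mem_Icc, mem_range] at *; omega)
    (fun _ hl => by simp only [mem_Icc] at hl; omega) (fun _ hi => by simp only [mem_range] at hi; omega)
    fun _ _ => rfl

theorem le_mul_one_add_pow_of_le_add_mul_sum_range {x : ℕ → ℝ} {A c : ℝ} {N : ℕ}
    (hc : 0 ≤ c) (hx : ∀ n ≤ N, x n ≤ A + c * ∑ i ∈ range n, x i) :
    ∀ n ≤ N, x n ≤ A * (1 + c) ^ n := by
  intro n
  induction n using Nat.strong_induction_on with
  | _ n ih =>
    intro hn
    have hgeom : (∑ i ∈ range n, (1 + c) ^ i) * c = (1 + c) ^ n - 1 := by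
      simpa using geom_sum_mul (1 + c) n
    calc x n ≤ A + c * ∑ i ∈ range n, x i := hx n hn
      _ ≤ A + c * ∑ i ∈ range n, A * (1 + c) ^ i := by
        gcongr with i hi
        exact ih i (mem_range.mp hi) (by grind)
      _ = A * (1 + c) ^ n := by rw [← mul_sum]; linear_combination A * hgeom

theorem le_mul_exp_of_le_add_mul_sum_range {x : ℕ → ℝ} {A c : ℝ} {N : ℕ}
    (hA : 0 ≤ A) (hc : 0 ≤ c) (hx : ∀ n ≤ N, x n ≤ A + c * ∑ i ∈ range n, x i) :
    ∀ n ≤ N, x n ≤ A * Real.exp (c * n) := by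
  intro n hn
  calc x n ≤ A * (1 + c) ^ n := le_mul_one_add_pow_of_le_add_mul_sum_range hc hx n hn
    _ ≤ A * Real.exp c ^ n := by gcongr; linarith [Real.add_one_le_exp c]
    _ = A * Real.exp (c * n) := by rw [← Real.exp_nat_mul, mul_comm c]

theorem stmt_16_general (α L δT : ℝ) (hα : 0 ≤ α) (hδT : 0 < δT)
    (J : ℕ) (a : ℝ) (ha : 0 ≤ a)
    (G : ℕ → ℝ)
    (hrec : ∀ j ≤ J, G j ^ 2 ≤ 2 * Real.exp (-2*α*δT) * a
      + 2 * δT * (δT / (J : ℝ)) * L^2 *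
        ∑ l ∈ Finset.Icc 1 j, Real.exp (-2*α*(l : ℝ)*(δT / (J : ℝ))) * G (j - l) ^ 2) :
    ∀ j ≤ J, G j ^ 2 ≤ 2 * Real.exp (2 * L^2 * δT^2) * Real.exp (-2*α*δT) * a := by
  intro j hj
  have hweight : ∀ l : ℕ, Real.exp (-2*α*(l : ℝ)*(δT / J)) ≤ 1 := fun l => by
    rw [Real.exp_le_one_iff]
    have : 0 ≤ α * l * (δT / J) := by positivity
    linarith
  have hgronwall : ∀ n ≤ J, G n ^ 2 ≤ 2 * Real.exp (-2*α*δT) * a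
      + 2 * δT * (δT / J) * L^2 * ∑ i ∈ range n, G i ^ 2 := fun n hn => by
    refine (hrec n hn).trans ?_
    rw [← sum_Icc_one_sub_eq_sum_range (fun i => G i ^ 2)]
    gcongr with l
    exact mul_le_of_le_one_left (sq_nonneg _) (hweight l)
  have hcj : 2 * δT * (δT / J) * L^2 * j ≤ 2 * L^2 * δT^2 := by
    have : (j : ℝ) / J ≤ 1 := div_le_one_of_le₀ (by exact_mod_cast hj) J.cast_nonneg
    calc 2 * δT * (δT / J) * L^2 * j = 2 * L^2 * δT^2 * (j / J) := by ring
      _ ≤ 2 * L^2 * δT^2 := mul_le_of_le_one_right (by positivity) this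
  calc G j ^ 2 ≤ 2 * Real.exp (-2*α*δT) * a * Real.exp (2 * δT * (δT / J) * L^2 * j) :=
        le_mul_exp_of_le_add_mul_sum_range (by positivity) (by positivity) hgronwall j hj
    _ ≤ 2 * Real.exp (-2*α*δT) * a * Real.exp (2 * L^2 * δT^2) := by gcongr
    _ = 2 * Real.exp (2 * L^2 * δT^2) * Real.exp (-2*α*δT) * a := by ring

/-- Discrete Gronwall estimate for the fine (exponential Euler) propagator on one
coarse interval of the fully discrete parareal scheme. -/
theorem stmt_16 (α L δT : ℝ) (hα : 0 ≤ α) (hL : 0 ≤ L) (hδT : 0 < δT)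
    (J : ℕ) (hJ : 1 ≤ J) (a : ℝ) (ha : 0 ≤ a)
    (G : ℕ → ℝ) (hGpos : ∀ j, 0 ≤ G j)
    (hrec : ∀ j ≤ J, G j ^ 2 ≤ 2 * Real.exp (-2*α*δT) * a
      + 2 * δT * (δT / (J : ℝ)) * L^2 *
        ∑ l ∈ Finset.Icc 1 j, Real.exp (-2*α*(l : ℝ)*(δT / (J : ℝ))) * G (j - l) ^ 2) :
    ∀ j ≤ J, G j ^ 2 ≤ 2 * Real.exp (2 * L^2 * δT^2) * Real.exp (-2*α*δT) * a :=
  stmt_16_general α L δT hα hδT J a ha G hrec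
end

section
/- Let n ≥ 2, β ∈ [0,1), and let M(β) be the n × n real matrix with entries M(β)_{ij} = β^{i−j−1} if i > j and M(β)_{ij} = 0 if i ≤ j (indices 1 ≤ i,j ≤ n). Then for every k ≥ 1, the maximum-row-sum operator norm satisfies ‖M(β)^k‖_∞ ≤ min{ ((1 − β^{n−1})/(1 − β))^k , binom(n−1, k) }. -/
/-!
Since `M(β)` has nonnegative entries, the row sums of `M(β)^k` form the vector `M(β)^k 𝟙`, and
any family of vectors `b k` with `𝟙 ≤ b 0` and `M(β) b k ≤ b (k+1)` dominates it by monotonicity.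
Two such families give the two bounds: the constant vectors `S^k`, where
`S = 1 + β + ⋯ + β^(n-2)` bounds every row sum of `M(β)`, and `b k i = binom(i, k)`, for which
`β ≤ 1` and the hockey-stick identity `∑_{j<i} binom(j, k) = binom(i, k+1)` give the step.
-/

open Finset Matrix

namespace Matrix

variable {ι R : Type*} [Fintype ι] [Semiring R]

lemma mulVec_one_apply (A : Matrix ι ι R) (i : ι) : (A *ᵥ 1) i = ∑ j, A i j := by
  simp [mulVec, dotProduct]

variable [PartialOrder R] [IsOrderedRing R] {A : Matrix ι ι R}

lemma mulVec_le_mulVec_of_nonneg (hA : ∀ i j, 0 ≤ A i j) {v w : ι → R} (hvw : v ≤ w) :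
    A *ᵥ v ≤ A *ᵥ w :=
  fun i => dotProduct_le_dotProduct_of_nonneg_left hvw (hA i)

lemma pow_mulVec_one_le [DecidableEq ι] (hA : ∀ i j, 0 ≤ A i j) (b : ℕ → ι → R) (h0 : 1 ≤ b 0)
    (hstep : ∀ k, A *ᵥ b k ≤ b (k + 1)) (k : ℕ) : A ^ k *ᵥ 1 ≤ b k := by
  induction k with
  | zero => simpa using h0
  | succ k ih =>
    rw [pow_succ', ← mulVec_mulVec]
    exact (mulVec_le_mulVec_of_nonneg hA ih).trans (hstep k)

end Matrix

lemma Nat.sum_range_choose_eq_choose_succ (k i : ℕ) :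
    ∑ j ∈ range i, j.choose k = i.choose (k + 1) := by
  induction i with
  | zero => simp
  | succ i ih => rw [sum_range_succ, ih, Nat.choose_succ_succ, Nat.add_comm]

section Parareal

variable {K : Type*} [Semiring K] {β : K} {n : ℕ}

def pararealMatrix (β : K) (n : ℕ) : Matrix (Fin n) (Fin n) K :=
  of fun i j => if (j : ℕ) < i then β ^ ((i : ℕ) - j - 1) else 0

lemma pararealMatrix_mulVec_apply (f : ℕ → K) (i : Fin n) :
    (pararealMatrix β n *ᵥ fun j => f j) i = ∑ j ∈ range i, β ^ ((i : ℕ) - j - 1) * f j := by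
  simp only [mulVec, dotProduct, pararealMatrix, of_apply, ite_mul, zero_mul]
  rw [Fin.sum_univ_eq_sum_range (fun j => if j < (i : ℕ) then β ^ ((i : ℕ) - j - 1) * f j else 0),
    ← sum_filter]
  congr 1
  ext j
  simp only [mem_filter, mem_range]
  omega

lemma sum_pararealMatrix_row (i : Fin n) :
    ∑ j, pararealMatrix β n i j = ∑ t ∈ range i, β ^ t := by
  rw [← mulVec_one_apply, ← sum_range_reflect]
  refine (pararealMatrix_mulVec_apply 1 i).trans (sum_congr rfl fun j _ => ?_)
  simp [Nat.sub_right_comm]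

variable [PartialOrder K] [IsOrderedRing K]

lemma pararealMatrix_nonneg (hβ : 0 ≤ β) (i j : Fin n) : 0 ≤ pararealMatrix β n i j := by
  simp only [pararealMatrix, of_apply]
  split_ifs <;> positivity

lemma pararealMatrix_pow_mulVec_one_le_geom_sum (hβ : 0 ≤ β) (k : ℕ) :
    pararealMatrix β n ^ k *ᵥ 1 ≤ fun _ => (∑ t ∈ range (n - 1), β ^ t) ^ k := by
  set S := ∑ t ∈ range (n - 1), β ^ t
  have hS : 0 ≤ S := sum_nonneg fun t _ => pow_nonneg hβ t
  refine pow_mulVec_one_le (pararealMatrix_nonneg hβ) (fun k _ => S ^ k)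
    (fun _ => by simp) (fun k i => ?_) k
  have hrow : ∑ j, pararealMatrix β n i j ≤ S := by
    rw [sum_pararealMatrix_row]
    exact sum_le_sum_of_subset_of_nonneg (range_subset_range.mpr (by omega))
      fun t _ _ => pow_nonneg hβ t
  calc (pararealMatrix β n *ᵥ fun _ => S ^ k) i = (∑ j, pararealMatrix β n i j) * S ^ k := by
        simp [mulVec, dotProduct, sum_mul]
    _ ≤ S * S ^ k := by gcongr
    _ = S ^ (k + 1) := (pow_succ' S k).symm

lemma pararealMatrix_pow_mulVec_one_le_choose (hβ0 : 0 ≤ β) (hβ1 : β ≤ 1) (k : ℕ) :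
    pararealMatrix β n ^ k *ᵥ 1 ≤ fun i : Fin n => ((i : ℕ).choose k : K) := by
  refine pow_mulVec_one_le (pararealMatrix_nonneg hβ0)
    (fun k (i : Fin n) => ((i : ℕ).choose k : K)) (fun _ => by simp) (fun k i => ?_) k
  calc (pararealMatrix β n *ᵥ fun l => ((l : ℕ).choose k : K)) i
      = ∑ j ∈ range i, β ^ ((i : ℕ) - j - 1) * (j.choose k : K) :=
        pararealMatrix_mulVec_apply (fun j => (j.choose k : K)) i
    _ ≤ ∑ j ∈ range i, (j.choose k : K) := by
        gcongr with j
        exact mul_le_of_le_one_left (Nat.cast_nonneg _) (pow_le_one₀ hβ0 hβ1)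
    _ = ((i : ℕ).choose (k + 1) : K) := by
        rw [← Nat.cast_sum, Nat.sum_range_choose_eq_choose_succ]

end Parareal

theorem stmt_18_general (n : ℕ) (β : ℝ) (hβ0 : 0 ≤ β) (hβ1 : β < 1)
    (M : Matrix (Fin n) (Fin n) ℝ)
    (hM : ∀ i j : Fin n, M i j = if (j : ℕ) < (i : ℕ) then β ^ ((i : ℕ) - (j : ℕ) - 1) else 0) :
    ∀ k : ℕ, 1 ≤ k → ∀ i : Fin n,
      ∑ j, |(M ^ k) i j| ≤
        min (((1 - β^(n-1)) / (1 - β))^k) ((n-1).choose k : ℝ) := by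
  obtain rfl : M = pararealMatrix β n := ext hM
  intro k _ i
  have hgeom : ∑ t ∈ range (n - 1), β ^ t = (1 - β ^ (n - 1)) / (1 - β) := by
    simpa using geom_sum_Ico' hβ1.ne (Nat.zero_le (n - 1))
  have habs : ∑ j, |(pararealMatrix β n ^ k) i j| = (pararealMatrix β n ^ k *ᵥ 1) i := by
    rw [mulVec_one_apply]
    exact sum_congr rfl fun j _ =>
      abs_of_nonneg (pow_apply_nonneg (pararealMatrix_nonneg hβ0) k i j)
  rw [habs, ← hgeom]
  refine le_min (pararealMatrix_pow_mulVec_one_le_geom_sum hβ0 k i) ?_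
  refine (pararealMatrix_pow_mulVec_one_le_choose hβ0 hβ1.le k i).trans ?_
  exact Nat.cast_le.mpr (Nat.choose_le_choose k (by omega))

/-- Norm bound for powers of the lower-triangular Toeplitz parareal iteration
matrix: the maximum absolute row sum of M(β)^k is at most
min{((1−β^{n−1})/(1−β))^k, binom(n−1,k)} for β ∈ [0,1). -/
theorem stmt_18 (n : ℕ) (hn : 2 ≤ n) (β : ℝ) (hβ0 : 0 ≤ β) (hβ1 : β < 1)
    (M : Matrix (Fin n) (Fin n) ℝ)
    (hM : ∀ i j : Fin n, M i j = if (j : ℕ) < (i : ℕ) then β ^ ((i : ℕ) - (j : ℕ) - 1) else 0) :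
    ∀ k : ℕ, 1 ≤ k → ∀ i : Fin n,
      ∑ j, |(M ^ k) i j| ≤
        min (((1 - β^(n-1)) / (1 - β))^k) ((n-1).choose k : ℝ) :=
  stmt_18_general n β hβ0 hβ1 M hM
end

section
/- Let θ ∈ [0,1], λ ∈ ℝ and α > √(max(1/2 − θ, 0)) · |λ|. Then there exists C > 0 (depending on θ, λ, α) such that for all δT ∈ (0,1] and all k ≥ 0 the following holds: with η := (1 + i(1−θ)λδT)/(1 − iθλδT) and any s ∈ ℂ with |s| = e^{-αδT}, if (ε_n^{(k)})_{n≥0,k≥0} are complex numbers with ε_0^{(k)} = 0 for all k, ε_n^{(k)} = η s ε_{n−1}^{(k)} + (e^{iλδT} − η) s ε_{n−1}^{(k−1)} for n,k ≥ 1, and E := sup_n |ε_n^{(0)}| < ∞, then sup_{n≥0} |ε_n^{(k)}| ≤ ( C(|2θ−1| δT + δT²) )^k · E. -/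
/-!
The error recursion has the form `ε (n+1) (k+1) = a ε n (k+1) + b ε n k` with `a = η s` and
`b = (e^{iλδT} - η) s`, and as soon as `‖a‖ Δ + ‖b‖ ≤ Δ`, induction on `k` and then on `n` gives
`‖ε n k‖ ≤ Δ^k E`.

Since `|η(x)|² ≤ 1 + (1 - 2θ)⁺ x² ≤ e^{2√((1/2-θ)⁺)|x|}`, the damping makes the coarse step a strict
contraction: `‖a‖ ≤ e^{-βδT} ≤ 1 - cδT` with `β = α - √((1/2-θ)⁺)|λ| > 0` and `c = 1 - e^{-β}`.
Expanding `e^{ix}(1 - iθx) - (1 + i(1-θ)x) = (1/2 - θ)(ix)² + O(|x|³)` gives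
`‖b‖ ≤ K δT (|2θ-1|δT + δT²)`, so `Δ = (K/c + 1)(|2θ-1|δT + δT²)` works.
-/

open Complex

theorem norm_le_pow_mul_of_recursion {R : Type*} [SeminormedRing R] {a b : R} {Δ E : ℝ}
    {ε : ℕ → ℕ → R} (hΔ : 0 ≤ Δ) (hab : ‖a‖ * Δ + ‖b‖ ≤ Δ) (h0 : ∀ k, ε 0 k = 0)
    (hrec : ∀ n k, ε (n + 1) (k + 1) = a * ε n (k + 1) + b * ε n k)
    (hE : ∀ n, ‖ε n 0‖ ≤ E) (k n : ℕ) : ‖ε n k‖ ≤ Δ ^ k * E := by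
  have hE0 : 0 ≤ E := (norm_nonneg _).trans (hE 0)
  induction k generalizing n with
  | zero => simpa using hE n
  | succ k ihk =>
    induction n with
    | zero => rw [h0, norm_zero]; positivity
    | succ n ihn =>
      calc ‖ε (n + 1) (k + 1)‖ ≤ ‖a‖ * ‖ε n (k + 1)‖ + ‖b‖ * ‖ε n k‖ := by
            rw [hrec]
            exact (norm_add_le _ _).trans (add_le_add (norm_mul_le _ _) (norm_mul_le _ _))
        _ ≤ ‖a‖ * (Δ ^ (k + 1) * E) + ‖b‖ * (Δ ^ k * E) := by gcongr; exact ihk n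
        _ = (‖a‖ * Δ + ‖b‖) * (Δ ^ k * E) := by ring
        _ ≤ Δ * (Δ ^ k * E) := by gcongr
        _ = Δ ^ (k + 1) * E := by ring

/-- The amplification factor `η` of the θ-scheme, as a function of `x = λ δT`. -/
noncomputable def thetaAmpFactor (θ x : ℝ) : ℂ := (1 + I * ((1 - θ) * x)) / (1 - I * (θ * x))

theorem normSq_thetaAmpFactor_le (θ x : ℝ) :
    normSq (thetaAmpFactor θ x) ≤ 1 + 2 * max (1 / 2 - θ) 0 * x ^ 2 := by
  have hnum : normSq (1 + I * ((1 - θ) * x)) = 1 + ((1 - θ) * x) ^ 2 := by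
    simp [normSq_apply]; ring
  have hden : normSq (1 - I * (θ * x)) = 1 + (θ * x) ^ 2 := by
    simp [normSq_apply]; ring
  rw [thetaAmpFactor, map_div₀, hnum, hden, div_le_iff₀ (by positivity)]
  rcases le_total θ (1 / 2) with h | h
  · rw [max_eq_left (by linarith)]
    nlinarith [mul_nonneg (sub_nonneg.2 h) (sq_nonneg (θ * x * x))]
  · rw [max_eq_right (by linarith)]
    nlinarith [mul_nonneg (sub_nonneg.2 h) (sq_nonneg x)]

theorem norm_thetaAmpFactor_le (θ x : ℝ) :
    ‖thetaAmpFactor θ x‖ ≤ Real.exp (√(max (1 / 2 - θ) 0) * |x|) := by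
  set m := max (1 / 2 - θ) 0
  have hm : 0 ≤ m := le_max_right _ _
  have hy : 0 ≤ 2 * (√m * |x|) := by positivity
  refine (pow_le_pow_iff_left₀ (norm_nonneg _) (Real.exp_nonneg _) two_ne_zero).1 ?_
  calc ‖thetaAmpFactor θ x‖ ^ 2 ≤ 1 + 2 * m * x ^ 2 := by
        rw [Complex.sq_norm]; exact normSq_thetaAmpFactor_le θ x
    _ ≤ 1 + 2 * (√m * |x|) + (2 * (√m * |x|)) ^ 2 / 2 := by
        nlinarith [Real.sq_sqrt hm, sq_abs x]
    _ ≤ Real.exp (2 * (√m * |x|)) := Real.quadratic_le_exp_of_nonneg hy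
    _ = Real.exp (√m * |x|) ^ 2 := by rw [sq, ← Real.exp_add, two_mul]

theorem norm_exp_mul_sub_le_of_abs_le_one {θ x : ℝ} (hθ0 : 0 ≤ θ) (hθ1 : θ ≤ 1) (hx : |x| ≤ 1) :
    ‖exp (I * x) * (1 - I * (θ * x)) - (1 + I * ((1 - θ) * x))‖
      ≤ |1 / 2 - θ| * x ^ 2 + 2 * |x| ^ 3 := by
  set z : ℂ := I * x
  have hz : ‖z‖ = |x| := by simp [z]
  have hz1 : ‖z‖ ≤ 1 := hz ▸ hx
  have hsum : ∑ m ∈ Finset.range 3, z ^ m / (m.factorial : ℂ) = 1 + z + z ^ 2 / 2 := by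
    simp [Finset.sum_range_succ, Nat.factorial]
  have hR3 : ‖exp z - (1 + z + z ^ 2 / 2)‖ ≤ |x| ^ 3 * (2 / 9) := by
    have h := Complex.exp_bound hz1 (n := 3) (by norm_num)
    rw [hsum, hz] at h
    norm_num [Nat.factorial] at h
    linarith
  have hR2 : ‖exp z - 1 - z‖ ≤ x ^ 2 := by
    simpa [hz, sq_abs] using Complex.norm_exp_sub_one_sub_id_le hz1
  have hsplit : exp z * (1 - I * (θ * x)) - (1 + I * ((1 - θ) * x))
      = (exp z - (1 + z + z ^ 2 / 2)) + ((1 / 2 - θ : ℝ) : ℂ) * z ^ 2 - θ * z * (exp z - 1 - z) := by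
    simp only [z]; push_cast; ring
  rw [hsplit]
  calc _ ≤ ‖exp z - (1 + z + z ^ 2 / 2)‖ + ‖((1 / 2 - θ : ℝ) : ℂ) * z ^ 2‖
          + ‖(θ : ℂ) * z * (exp z - 1 - z)‖ := norm_sub_le_of_le (norm_add_le _ _) le_rfl
    _ ≤ |x| ^ 3 * (2 / 9) + |1 / 2 - θ| * x ^ 2 + θ * |x| * |x| ^ 2 := by
        simp only [norm_mul, norm_pow, hz, Complex.norm_real, Real.norm_eq_abs, sq_abs,
          abs_of_nonneg hθ0]
        gcongr
    _ ≤ |1 / 2 - θ| * x ^ 2 + 2 * |x| ^ 3 := by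
        nlinarith [pow_nonneg (abs_nonneg x) 3]

theorem norm_exp_mul_sub_le {θ : ℝ} (hθ0 : 0 ≤ θ) (hθ1 : θ ≤ 1) (x : ℝ) :
    ‖exp (I * x) * (1 - I * (θ * x)) - (1 + I * ((1 - θ) * x))‖
      ≤ |1 / 2 - θ| * x ^ 2 + 3 * |x| ^ 3 := by
  rcases le_or_gt |x| 1 with hx | hx
  · linarith [norm_exp_mul_sub_le_of_abs_le_one hθ0 hθ1 hx, pow_nonneg (abs_nonneg x) 3]
  · have hnum : ‖1 + I * ((1 - θ) * x)‖ ≤ 1 + (1 - θ) * |x| := by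
      refine (norm_add_le _ _).trans ?_
      rw [norm_one, show (1 - (θ : ℂ)) * x = (((1 - θ) * x : ℝ) : ℂ) by push_cast; ring,
        norm_mul, norm_I, one_mul, norm_real, Real.norm_eq_abs, abs_mul,
        abs_of_nonneg (sub_nonneg.2 hθ1)]
    have hden : ‖1 - I * (θ * x)‖ ≤ 1 + θ * |x| := by
      refine (norm_sub_le _ _).trans ?_
      simp [abs_of_nonneg hθ0]
    calc _ ≤ ‖exp (I * x)‖ * ‖1 - I * (θ * x)‖ + ‖1 + I * ((1 - θ) * x)‖ := by
          rw [← norm_mul]; exact norm_sub_le _ _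
      _ ≤ 1 * (1 + θ * |x|) + (1 + (1 - θ) * |x|) := by
          rw [norm_exp_I_mul_ofReal]; gcongr
      _ ≤ |1 / 2 - θ| * x ^ 2 + 3 * |x| ^ 3 := by
          nlinarith [abs_nonneg (1 / 2 - θ), sq_nonneg x, mul_le_mul hx.le hx.le zero_le_one (abs_nonneg x)]

theorem norm_exp_sub_thetaAmpFactor_le {θ : ℝ} (hθ0 : 0 ≤ θ) (hθ1 : θ ≤ 1) (x : ℝ) :
    ‖exp (I * x) - thetaAmpFactor θ x‖ ≤ |1 / 2 - θ| * x ^ 2 + 3 * |x| ^ 3 := by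
  have hden : 1 ≤ ‖1 - I * (θ * x)‖ := by simpa using Complex.re_le_norm (1 - I * (θ * x))
  have hden0 : 1 - I * (θ * x) ≠ 0 := norm_pos_iff.1 (one_pos.trans_le hden)
  calc ‖exp (I * x) - thetaAmpFactor θ x‖
      = ‖exp (I * x) * (1 - I * (θ * x)) - (1 + I * ((1 - θ) * x))‖ / ‖1 - I * (θ * x)‖ := by
        rw [thetaAmpFactor, ← norm_div, sub_div, mul_div_cancel_right₀ _ hden0]
    _ ≤ ‖exp (I * x) * (1 - I * (θ * x)) - (1 + I * ((1 - θ) * x))‖ := div_le_self (norm_nonneg _) hden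
    _ ≤ _ := norm_exp_mul_sub_le hθ0 hθ1 x

theorem exp_neg_mul_le_one_sub_mul (β : ℝ) {t : ℝ} (ht0 : 0 ≤ t) (ht1 : t ≤ 1) :
    Real.exp (-(β * t)) ≤ 1 - (1 - Real.exp (-β)) * t := by
  have h := convexOn_exp.2 (Set.mem_univ 0) (Set.mem_univ (-β)) (sub_nonneg.2 ht1) ht0
    (sub_add_cancel 1 t)
  simp only [smul_eq_mul, mul_zero, zero_add, Real.exp_zero, mul_one] at h
  calc Real.exp (-(β * t)) = Real.exp (t * -β) := by ring_nf
    _ ≤ 1 - t + t * Real.exp (-β) := h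
    _ = 1 - (1 - Real.exp (-β)) * t := by ring

theorem norm_thetaAmpFactor_mul_le {θ lam α t : ℝ} {s : ℂ} (ht : 0 ≤ t)
    (hs : ‖s‖ = Real.exp (-α * t)) :
    ‖thetaAmpFactor θ (lam * t) * s‖ ≤ Real.exp (-((α - √(max (1 / 2 - θ) 0) * |lam|) * t)) := by
  rw [norm_mul, hs]
  calc _ ≤ Real.exp (√(max (1 / 2 - θ) 0) * |lam * t|) * Real.exp (-α * t) := by
        gcongr; exact norm_thetaAmpFactor_le θ (lam * t)
    _ = _ := by rw [← Real.exp_add, abs_mul, abs_of_nonneg ht]; ring_nf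

theorem norm_exp_sub_thetaAmpFactor_mul_le {θ lam t : ℝ} {s : ℂ} (hθ0 : 0 ≤ θ) (hθ1 : θ ≤ 1)
    (ht : 0 ≤ t) (hs : ‖s‖ ≤ 1) :
    ‖(exp (I * (lam * t)) - thetaAmpFactor θ (lam * t)) * s‖
      ≤ (lam ^ 2 / 2 + 3 * |lam| ^ 3) * t * (|2 * θ - 1| * t + t ^ 2) := by
  have h2θ : |1 / 2 - θ| = |2 * θ - 1| / 2 := by
    rw [← abs_two, ← abs_div, abs_two, ← abs_neg]; ring_nf
  calc _ ≤ ‖exp (I * (lam * t)) - thetaAmpFactor θ (lam * t)‖ * 1 := by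
        rw [norm_mul]; gcongr
    _ ≤ |1 / 2 - θ| * (lam * t) ^ 2 + 3 * |lam * t| ^ 3 := by
        rw [mul_one]; exact_mod_cast norm_exp_sub_thetaAmpFactor_le hθ0 hθ1 (lam * t)
    _ ≤ _ := by
        rw [h2θ, abs_mul, abs_of_nonneg ht]
        nlinarith [mul_nonneg (mul_nonneg (abs_nonneg (2 * θ - 1)) (pow_nonneg (abs_nonneg lam) 3))
          (sq_nonneg t), mul_nonneg (sq_nonneg lam) (pow_nonneg ht 3)]

/-- Main single-mode convergence theorem for the parareal exponential θ-scheme: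
under α > √((1/2−θ)⁺)|λ|, the k-th parareal iterate converges uniformly in time
with rate (C(|2θ−1|δT + δT²))^k. -/
theorem stmt_19 (θ lam α : ℝ) (hθ : θ ∈ Set.Icc (0:ℝ) 1)
    (hα : Real.sqrt (max (1/2 - θ) 0) * |lam| < α) :
    ∃ C > 0, ∀ δT : ℝ, 0 < δT → δT ≤ 1 → ∀ k : ℕ,
      ∀ s : ℂ, ‖s‖ = Real.exp (-α * δT) →
      ∀ ε : ℕ → ℕ → ℂ,
        (∀ k', ε 0 k' = 0) →
        (∀ n k', 1 ≤ n → 1 ≤ k' →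
          ε n k' = (1 + Complex.I * ((1 - θ) * lam * δT)) / (1 - Complex.I * (θ * lam * δT))
              * s * ε (n - 1) k'
            + (Complex.exp (Complex.I * (lam * δT))
                - (1 + Complex.I * ((1 - θ) * lam * δT)) / (1 - Complex.I * (θ * lam * δT)))
              * s * ε (n - 1) (k' - 1)) →
        ∀ E : ℝ, (∀ n, ‖ε n 0‖ ≤ E) →
        ∀ n, ‖ε n k‖ ≤ (C * (|2*θ - 1| * δT + δT^2))^k * E := by
  obtain ⟨hθ0, hθ1⟩ := hθ
  set β := α - √(max (1 / 2 - θ) 0) * |lam|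
  set c := 1 - Real.exp (-β)
  set K := lam ^ 2 / 2 + 3 * |lam| ^ 3
  have hc : 0 < c := sub_pos.2 (Real.exp_lt_one_iff.2 (by linarith))
  refine ⟨K / c + 1, by positivity, fun δT ht0 ht1 k s hs ε h0 hrec E hE n => ?_⟩
  have hα0 : 0 < α := hα.trans_le' (by positivity)
  have hs1 : ‖s‖ ≤ 1 := by rw [hs, Real.exp_le_one_iff]; nlinarith
  have hq := (norm_thetaAmpFactor_mul_le (lam := lam) ht0.le hs).trans
    (exp_neg_mul_le_one_sub_mul β ht0.le ht1)
  have hr := norm_exp_sub_thetaAmpFactor_mul_le (lam := lam) (s := s) hθ0 hθ1 ht0.le hs1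
  have hcK : c * (K / c + 1) = K + c := by field_simp
  have hη : (1 + I * ((1 - θ) * lam * δT)) / (1 - I * (θ * lam * δT))
      = thetaAmpFactor θ (lam * δT) := by rw [thetaAmpFactor]; push_cast; ring_nf
  refine norm_le_pow_mul_of_recursion (a := thetaAmpFactor θ (lam * δT) * s)
    (b := (exp (I * (lam * δT)) - thetaAmpFactor θ (lam * δT)) * s) (by positivity) ?_ h0
    (fun n k => ?_) hE k n
  · set u := |2 * θ - 1| * δT + δT ^ 2
    calc _ ≤ (1 - c * δT) * ((K / c + 1) * u) + K * δT * u :=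
          add_le_add (mul_le_mul_of_nonneg_right hq (by positivity)) hr
      _ = (K / c + 1) * u - c * δT * u := by linear_combination (-δT * u) * hcK
      _ ≤ (K / c + 1) * u := sub_le_self _ (by positivity)
  · simpa [hη] using hrec (n + 1) (k + 1) (by omega) (by omega)
end
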